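/- Let X, Y be real normed spaces, A : X → Y continuous linear, C ⊆ X and D ⊆ Y nonempty closed convex sets, and K := Λ + epi σ_C with Λ := {(A*λ, σ_D(λ)) : λ ∈ Y*, σ_D(λ) < ∞}. Then C ∩ A⁻¹(D) ≠ ∅ if and only if (0, −1) ∉ w*-cl K (closure in X* × ℝ with the weak-* product topology). -/

import Mathlib

/-!
`K` is a convex cone: a pair `(A* l, r)` with `r ≥ σ_D l` differs from a point of `Λ` by
`(0, r - σ_D l) ∈ epi σ_C`, so `K = A*(epi σ_D) + epi σ_C`. A continuous linear functional on
`X*_{w*} × ℝ` has the form `(p, t) ↦ p x + t β`, so separating `(0, -1)` from the closed cone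
`w*-cl K` produces a point `x` with `p x ≤ t` on all of `K`, and conversely such an `x` keeps
`(0, -1)` out of the closure. Since `C` and `D` are closed and convex, Hahn–Banach shows that
`p x ≤ t` on `epi σ_C` and on `A*(epi σ_D)` means exactly `x ∈ C` and `A x ∈ D`.
-/

open Pointwise

/-- The strong dual element viewed in the weak-* dual. -/
def toWeakDual {X : Type*} [NormedAddCommGroup X] [NormedSpace ℝ X]
    (f : X →L[ℝ] ℝ) : WeakDual ℝ X := f

open Set

instance WeakDual.instLocallyConvexSpace {X : Type*} [TopologicalSpace X] [AddCommGroup X]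
    [Module ℝ X] : LocallyConvexSpace ℝ (WeakDual ℝ X) :=
  WeakBilin.locallyConvexSpace

section EpiSupport

variable {E : Type*} [TopologicalSpace E] [AddCommGroup E] [Module ℝ E]

/-- The epigraph of the support function `σ_S`, inside the weak-* dual. -/
def epiSupport (S : Set E) : PointedCone ℝ (WeakDual ℝ E × ℝ) where
  carrier := {p | ∀ x ∈ S, p.1 x ≤ p.2}
  add_mem' hp hq x hx := add_le_add (hp x hx) (hq x hx)
  zero_mem' _ _ := le_rfl
  smul_mem' c _ hp x hx := smul_le_smul_of_nonneg_left (hp x hx) c.2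

variable {S : Set E} {p : WeakDual ℝ E × ℝ}

theorem mem_epiSupport : p ∈ epiSupport S ↔ ∀ x ∈ S, p.1 x ≤ p.2 := Iff.rfl

theorem epiSupport_le_epiSupport_singleton_iff [IsTopologicalAddGroup E] [ContinuousSMul ℝ E]
    [LocallyConvexSpace ℝ E] (hconv : Convex ℝ S) (hcl : IsClosed S) {x : E} :
    epiSupport S ≤ epiSupport {x} ↔ x ∈ S := by
  refine ⟨fun h => ?_, fun hx q hq y hy => (eq_of_mem_singleton hy) ▸ hq x hx⟩
  by_contra hx
  obtain ⟨f, u, hfS, hux⟩ := geometric_hahn_banach_closed_point hconv hcl hx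
  have hfx : f x ≤ u :=
    h (show (StrongDual.toWeakDual f, u) ∈ epiSupport S from fun y hy => (hfS y hy).le) x rfl
  exact hfx.not_gt hux

theorem WeakDual.exists_apply_prod_eq (f : StrongDual ℝ (WeakDual ℝ E × ℝ)) :
    ∃ x : E, ∀ p t, f (p, t) = p x + t * f (0, 1) := by
  obtain ⟨x, hx⟩ :=
    LinearMap.dualEmbedding_surjective (topDualPairing ℝ E) (f.comp (.inl ℝ _ ℝ))
  refine ⟨x, fun p t => ?_⟩
  have hsplit : (p, t) = (p, 0) + t • ((0 : WeakDual ℝ E), (1 : ℝ)) := by simp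
  have hp : f (p, 0) = p x := (DFunLike.congr_fun hx p).symm
  rw [hsplit, map_add, map_smul, smul_eq_mul, hp]

theorem mk_zero_neg_one_notMem_closure_iff (P : PointedCone ℝ (WeakDual ℝ E × ℝ)) :
    ((0 : WeakDual ℝ E), (-1 : ℝ)) ∉ closure (P : Set (WeakDual ℝ E × ℝ)) ↔
      ∃ x : E, P ≤ epiSupport {x} := by
  constructor
  · intro h
    obtain ⟨f, hfP, hf⟩ := ProperCone.hyperplane_separation_point (Submodule.closure P) h
    obtain ⟨x, hfx⟩ := WeakDual.exists_apply_prod_eq f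
    have hβ : 0 < f (0, 1) := by
      have h0 : f (0, -1) = 0 + -1 * f (0, 1) := hfx 0 (-1)
      linarith
    refine ⟨-(f (0, 1))⁻¹ • x, fun q hq y hy => ?_⟩
    rw [eq_of_mem_singleton hy, map_smul, smul_eq_mul, neg_mul, ← div_eq_inv_mul, neg_le,
      le_div_iff₀ hβ]
    have hfq : 0 ≤ q.1 x + q.2 * f (0, 1) := hfx q.1 q.2 ▸ hfP q (subset_closure hq)
    linarith
  · rintro ⟨x, hPx⟩ h
    have hcl : IsClosed {q : WeakDual ℝ E × ℝ | q.1 x ≤ q.2} :=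
      isClosed_le ((WeakDual.eval_continuous x).comp continuous_fst) continuous_snd
    have h01 : (0 : ℝ) ≤ -1 := closure_minimal (fun q hq => hPx hq x rfl) hcl h
    norm_num at h01

end EpiSupport

section Feasibility

variable {X Y : Type*} [NormedAddCommGroup X] [NormedSpace ℝ X] [NormedAddCommGroup Y]
  [NormedSpace ℝ Y] (A : X →L[ℝ] Y) (C : Set X) (D : Set Y)

noncomputable def adjointProdMap : WeakDual ℝ Y × ℝ →ₗ[ℝ] WeakDual ℝ X × ℝ where
  toFun q := (toWeakDual ((WeakDual.toStrongDual q.1).comp A), q.2)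
  map_add' _ _ := rfl
  map_smul' _ _ := rfl

theorem map_adjointProdMap_le_epiSupport_singleton_iff {S : Set Y} (x : X) :
    (epiSupport S).map (adjointProdMap A) ≤ epiSupport {x} ↔
      epiSupport S ≤ epiSupport {A x} := by
  rw [PointedCone.map, Submodule.map_le_iff_le_comap]
  simp only [SetLike.le_def, Submodule.mem_comap, mem_epiSupport, mem_singleton_iff, forall_eq]
  rfl

noncomputable def feasibilityCone : PointedCone ℝ (WeakDual ℝ X × ℝ) :=
  (epiSupport D).map (adjointProdMap A) ⊔ epiSupport C

def adjointSupportGraph : Set (WeakDual ℝ X × ℝ) :=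
  {p | ∃ l : Y →L[ℝ] ℝ, BddAbove ((fun y => l y) '' D) ∧
    p = (toWeakDual (l.comp A), sSup ((fun y => l y) '' D))}

variable {A C D}

theorem adjointSupportGraph_add_epiSupport (hD : D.Nonempty) :
    adjointSupportGraph A D + (epiSupport C : Set (WeakDual ℝ X × ℝ)) =
      feasibilityCone A C D := by
  rw [feasibilityCone, Submodule.coe_sup]
  refine subset_antisymm (add_subset_add_right ?_) ?_
  · rintro _ ⟨l, hbdd, rfl⟩
    exact ⟨(StrongDual.toWeakDual l, sSup ((fun y => l y) '' D)),
      fun y hy => le_csSup hbdd (mem_image_of_mem _ hy), rfl⟩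
  · rintro _ ⟨_, ⟨⟨l, r⟩, hlr, rfl⟩, e, he, rfl⟩
    have hσ : sSup ((fun y => l y) '' D) ≤ r := csSup_le (hD.image _) (forall_mem_image.2 hlr)
    refine ⟨_, ⟨WeakDual.toStrongDual l, ⟨r, forall_mem_image.2 hlr⟩, rfl⟩,
      e + (0, r - sSup ((fun y => l y) '' D)), ?_, ?_⟩
    · exact (epiSupport C).add_mem he fun _ _ => show (0 : ℝ) ≤ _ from sub_nonneg.2 hσ
    · ext
      · exact congrArg (_ + ·) (add_zero e.1)
      · change sSup ((fun y => l y) '' D) + (e.2 + (r - sSup ((fun y => l y) '' D))) = r + e.2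
        ring

theorem feasibilityCone_le_epiSupport_singleton_iff (hCcl : IsClosed C) (hCconv : Convex ℝ C)
    (hDcl : IsClosed D) (hDconv : Convex ℝ D) (x : X) :
    feasibilityCone A C D ≤ epiSupport {x} ↔ x ∈ C ∩ A ⁻¹' D := by
  rw [feasibilityCone, sup_le_iff, map_adjointProdMap_le_epiSupport_singleton_iff,
    epiSupport_le_epiSupport_singleton_iff hDconv hDcl,
    epiSupport_le_epiSupport_singleton_iff hCconv hCcl]
  exact and_comm

end Feasibility

theorem feasible_nonempty_iff_not_mem_wclosure_K_general {X Y : Type*}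
    [NormedAddCommGroup X] [NormedSpace ℝ X] [NormedAddCommGroup Y] [NormedSpace ℝ Y]
    (A : X →L[ℝ] Y) (C : Set X) (D : Set Y)
    (hCcl : IsClosed C) (hCconv : Convex ℝ C)
    (hDne : D.Nonempty) (hDcl : IsClosed D) (hDconv : Convex ℝ D) :
    (C ∩ A ⁻¹' D).Nonempty ↔
      ((0 : WeakDual ℝ X), (-1 : ℝ)) ∉
        closure
          ({p : WeakDual ℝ X × ℝ | ∃ l : Y →L[ℝ] ℝ, BddAbove ((fun y => l y) '' D) ∧
              p = (toWeakDual (l.comp A), sSup ((fun y => l y) '' D))}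
            + {p : WeakDual ℝ X × ℝ | ∀ x ∈ C, p.1 x ≤ p.2}) := by
  calc (C ∩ A ⁻¹' D).Nonempty ↔ ∃ x, feasibilityCone A C D ≤ epiSupport {x} :=
        exists_congr fun x =>
          (feasibilityCone_le_epiSupport_singleton_iff hCcl hCconv hDcl hDconv x).symm
    _ ↔ _ ∉ closure (feasibilityCone A C D : Set (WeakDual ℝ X × ℝ)) :=
        (mk_zero_neg_one_notMem_closure_iff _).symm
    _ ↔ _ := by rw [← adjointSupportGraph_add_epiSupport hDne]; rfl

/-- Proposition 1 (Existence theorem): for `C, D` nonempty closed convex sets,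
`C ∩ A⁻¹(D) ≠ ∅` iff `(0, −1)` does not belong to the weak-* closure of
`K := Λ + epi σ_C`. -/
theorem feasible_nonempty_iff_not_mem_wclosure_K {X Y : Type*}
    [NormedAddCommGroup X] [NormedSpace ℝ X] [NormedAddCommGroup Y] [NormedSpace ℝ Y]
    (A : X →L[ℝ] Y) (C : Set X) (D : Set Y)
    (hCne : C.Nonempty) (hCcl : IsClosed C) (hCconv : Convex ℝ C)
    (hDne : D.Nonempty) (hDcl : IsClosed D) (hDconv : Convex ℝ D) :
    (C ∩ A ⁻¹' D).Nonempty ↔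
      ((0 : WeakDual ℝ X), (-1 : ℝ)) ∉
        closure
          ({p : WeakDual ℝ X × ℝ | ∃ l : Y →L[ℝ] ℝ, BddAbove ((fun y => l y) '' D) ∧
              p = (toWeakDual (l.comp A), sSup ((fun y => l y) '' D))}
            + {p : WeakDual ℝ X × ℝ | ∀ x ∈ C, p.1 x ≤ p.2}) :=
  feasible_nonempty_iff_not_mem_wclosure_K_general A C D hCcl hCconv hDne hDcl hDconv
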